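/- arXiv:2211.04377 — 3 statements merged into one kernel-verified Lean document; each statement's English description precedes it below -/
import Mathlib

section
/- Let p ≥ 5 be a prime, m ≥ 1, and let ζ be a primitive p^m-th root of unity in an algebraic closure of Q_p. Then the infimum over positive integers n of ord_p((ζ-1)^n / n) equals 1/(p-1) + 1 - m, and this infimum is attained at n = p^m. Here ord_p is the p-adic valuation normalized by ord_p(p) = 1. -/
/-!
Write `q = p^(m-1) (p-1)` and `v = v_p(n)`. Since `i ↦ p^i` has increasing differences, `p^i` lies
above the line through `(m-1, p^(m-1))` and `(m, p^m)`, whose slope is `q`; as `p^v ∣ n` this gives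
`n ≥ p^v ≥ p^(m-1) + (v - m + 1) q`, and dividing by `q` yields `n/q - v ≥ 1/(p-1) + 1 - m`,
with equality at `n = p^m`.
-/

open fwdDiff

section ConvexSequence

variable {G : Type*} [AddCommGroup G] [PartialOrder G] [IsOrderedAddMonoid G] {f : ℕ → G}

lemma add_nsmul_fwdDiff_le_of_monotone (hf : Monotone (Δ_[1] f)) (k d : ℕ) :
    f k + d • Δ_[1] f k ≤ f (k + d) := by
  induction d with
  | zero => simp
  | succ d ih =>
    calc f k + (d + 1) • Δ_[1] f k = f k + d • Δ_[1] f k + Δ_[1] f k := by rw [succ_nsmul, add_assoc]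
      _ ≤ f (k + d) + Δ_[1] f (k + d) := add_le_add ih (hf (Nat.le_add_right k d))
      _ = f (k + (d + 1)) := add_sub_cancel _ _

lemma le_add_nsmul_fwdDiff_of_monotone (hf : Monotone (Δ_[1] f)) (j d : ℕ) :
    f (j + d) ≤ f j + d • Δ_[1] f (j + d) := by
  induction d with
  | zero => simp
  | succ d ih =>
    calc f (j + (d + 1)) = f (j + d) + Δ_[1] f (j + d) := (add_sub_cancel _ _).symm
      _ ≤ f j + d • Δ_[1] f (j + d) + Δ_[1] f (j + d) := add_le_add_left ih _
      _ ≤ f j + (d + 1) • Δ_[1] f (j + (d + 1)) := by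
        rw [succ_nsmul, add_assoc]
        have hstep : Δ_[1] f (j + d) ≤ Δ_[1] f (j + (d + 1)) := hf (Nat.le_succ _)
        gcongr

theorem add_zsmul_fwdDiff_le_of_monotone (hf : Monotone (Δ_[1] f)) (j k : ℕ) :
    f k + ((j : ℤ) - k) • Δ_[1] f k ≤ f j := by
  rcases le_total k j with hkj | hjk
  · obtain ⟨d, rfl⟩ := Nat.exists_eq_add_of_le hkj
    simpa using add_nsmul_fwdDiff_le_of_monotone hf k d
  · obtain ⟨d, rfl⟩ := Nat.exists_eq_add_of_le hjk
    have := le_add_nsmul_fwdDiff_of_monotone hf j d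
    simp only [Nat.cast_add, sub_add_cancel_left, neg_zsmul, natCast_zsmul]
    rwa [← sub_eq_add_neg, sub_le_iff_le_add]

end ConvexSequence

lemma monotone_fwdDiff_pow {R : Type*} [CommRing R] [LinearOrder R] [IsStrictOrderedRing R]
    {a : R} (ha : 0 ≤ a) : Monotone (Δ_[1] (a ^ · : ℕ → R)) := by
  intro i j hij
  simp only [fwdDiff, pow_succ, ← mul_sub_one]
  rcases le_total 1 a with h | h
  · exact mul_le_mul_of_nonneg_right (pow_le_pow_right₀ h hij) (sub_nonneg.2 h)
  · exact mul_le_mul_of_nonpos_right (pow_le_pow_of_le_one ha h hij) (sub_nonpos.2 h)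

lemma pow_add_sub_mul_le_padicValNat (p : ℕ) {n : ℕ} (hn : n ≠ 0) (k : ℕ) :
    (p : ℚ) ^ k + ((padicValNat p n : ℚ) - k) * ((p : ℚ) ^ k * (p - 1)) ≤ n := by
  have hsecant := add_zsmul_fwdDiff_le_of_monotone
    (monotone_fwdDiff_pow (Nat.cast_nonneg p : (0 : ℚ) ≤ p)) (padicValNat p n) k
  have hdvd : p ^ padicValNat p n ≤ n := Nat.le_of_dvd (Nat.pos_of_ne_zero hn) pow_padicValNat_dvd
  simp only [fwdDiff, pow_succ, ← mul_sub_one, zsmul_eq_mul, Int.cast_sub, Int.cast_natCast]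
    at hsecant
  exact hsecant.trans (by exact_mod_cast hdvd)

theorem inf_ord_zeta_sub_one_pow_div_general
    (p : ℕ) (hp : p.Prime) (m : ℕ) (hm : 1 ≤ m)
    (σ : ℚ) (hσ : σ = 1 / ((p : ℚ) ^ (m - 1) * ((p : ℚ) - 1))) :
    IsLeast {x : ℚ | ∃ n : ℕ, 1 ≤ n ∧ x = n * σ - (padicValNat p n : ℚ)}
      (1 / ((p : ℚ) - 1) + 1 - m) ∧
    (p ^ m : ℕ) * σ - (padicValNat p (p ^ m) : ℚ) = 1 / ((p : ℚ) - 1) + 1 - m := by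
  have : Fact p.Prime := ⟨hp⟩
  obtain ⟨k, rfl⟩ : ∃ k, m = k + 1 := ⟨m - 1, by omega⟩
  rw [Nat.add_sub_cancel] at hσ
  have hp0 : (0 : ℚ) < p := by exact_mod_cast hp.pos
  have hp1 : (0 : ℚ) < p - 1 := sub_pos.2 (by exact_mod_cast hp.one_lt)
  have hq : (0 : ℚ) < p ^ k * (p - 1) := by positivity
  have attained : ((p ^ (k + 1) : ℕ) : ℚ) * σ - (padicValNat p (p ^ (k + 1)) : ℚ)
      = 1 / ((p : ℚ) - 1) + 1 - (k + 1 : ℕ) := by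
    rw [padicValNat.prime_pow, hσ]
    field_simp
    push_cast
    ring
  refine ⟨⟨⟨p ^ (k + 1), Nat.one_le_pow _ _ hp.pos, attained.symm⟩, ?_⟩, attained⟩
  rintro _ ⟨n, hn, rfl⟩
  have hbound := pow_add_sub_mul_le_padicValNat p (by omega : n ≠ 0) k
  rw [hσ, ← div_eq_mul_one_div, le_sub_iff_add_le, le_div_iff₀ hq]
  field_simp
  push_cast
  linarith

/-- Let `p ≥ 5` be a prime and `m ≥ 1`, and let `ζ` be a primitive `p^m`-th root of unity
(so that `ord_p (ζ - 1) = 1 / (p^(m-1) * (p-1))`).  Then the infimum over positive integers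
`n` of `ord_p ((ζ-1)^n / n) = n · ord_p (ζ-1) - ord_p n` equals `1/(p-1) + 1 - m`, and it is
attained at `n = p^m`. -/
theorem inf_ord_zeta_sub_one_pow_div
    (p : ℕ) (hp : p.Prime) (hp5 : 5 ≤ p) (m : ℕ) (hm : 1 ≤ m)
    (σ : ℚ) (hσ : σ = 1 / ((p : ℚ) ^ (m - 1) * ((p : ℚ) - 1))) :
    IsLeast {x : ℚ | ∃ n : ℕ, 1 ≤ n ∧ x = n * σ - (padicValNat p n : ℚ)}
      (1 / ((p : ℚ) - 1) + 1 - m) ∧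
    (p ^ m : ℕ) * σ - (padicValNat p (p ^ m) : ℚ) = 1 / ((p : ℚ) - 1) + 1 - m :=
  inf_ord_zeta_sub_one_pow_div_general p hp m hm σ hσ
end

section
/- Let Λ be an integral domain and M a Λ-module with a surjection from a rank-2 free module identifying the image of a Λ-linear injective map Col : M → Λ^⊕2 with I = {(G₁, G₂) ∈ Λ^⊕2 : c₁·G₁(0) = c₂·G₂(0)}, where Λ = O[[X]], evaluation at 0 is the augmentation G ↦ G(0), and c₁, c₂ ∈ O with c₁ a unit. Then the pair of elements (X, 0) and (c₂/c₁, 1) forms a Λ-basis of I, and hence pulls back to a Λ-basis (z₁, z₂) of M. -/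
open PowerSeries

/-- The `Λ`-submodule `I = {(G₁, G₂) ∈ Λ ⊕ Λ : c₁·G₁(0) = c₂·G₂(0)}` of `Λ ⊕ Λ`, where
`Λ = O[[X]]` and `G(0)` denotes the constant coefficient. -/
def colImage (O : Type*) [CommRing O] (c₁ c₂ : O) :
    Submodule (PowerSeries O) (PowerSeries O × PowerSeries O) where
  carrier := {G | c₁ * PowerSeries.constantCoeff G.1 = c₂ * PowerSeries.constantCoeff G.2}
  add_mem' := by
    intro a b ha hb
    simp only [Set.mem_setOf_eq, Prod.fst_add, Prod.snd_add, map_add, mul_add] at *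
    rw [ha, hb]
  zero_mem' := by simp
  smul_mem' := by
    intro c x hx
    simp only [Set.mem_setOf_eq, Prod.smul_fst, Prod.smul_snd, smul_eq_mul, map_mul] at *
    rw [mul_left_comm, hx, mul_left_comm]

/-! A pair `(G₁, G₂)` lies in `I` exactly when `X ∣ G₁ - a'·G₂`, i.e. when
`(G₁, G₂) = H·(X, 0) + G₂·(a', 1)`; the coefficients are unique because `X` is a
non-zero-divisor of `R⟦X⟧`. Since `Col` is an isomorphism onto `I`, the basis transports to `M`. -/

section

variable {R : Type*} [CommRing R]

theorem PowerSeries.linearIndependent_X_zero_C_one (a : R) :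
    LinearIndependent R⟦X⟧ ![((X : R⟦X⟧), (0 : R⟦X⟧)), (C a, 1)] := by
  refine LinearIndependent.pair_iff.mpr fun s t hst => ?_
  have ht : t = 0 := by simpa using congrArg Prod.snd hst
  subst ht
  have hs : s * X = 0 * X := by simpa using congrArg Prod.fst hst
  exact ⟨mul_X_cancel hs, rfl⟩

theorem mem_colImage_iff {c₁ c₂ a : R} (hc₁ : IsUnit c₁) (ha : c₁ * a = c₂)
    {G : R⟦X⟧ × R⟦X⟧} :
    G ∈ colImage R c₁ c₂ ↔ constantCoeff G.1 = a * constantCoeff G.2 := by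
  change c₁ * _ = c₂ * _ ↔ _
  rw [← ha, mul_assoc, hc₁.mul_right_inj]

theorem span_X_zero_C_one_eq_colImage {c₁ c₂ a : R} (hc₁ : IsUnit c₁) (ha : c₁ * a = c₂) :
    Submodule.span R⟦X⟧ (Set.range ![((X : R⟦X⟧), (0 : R⟦X⟧)), (C a, 1)]) =
      colImage R c₁ c₂ := by
  ext ⟨G₁, G₂⟩
  rw [mem_colImage_iff hc₁ ha, Matrix.range_cons_cons_empty, Submodule.mem_span_pair]
  constructor
  · rintro ⟨s, t, hst⟩
    simp only [Prod.smul_mk, smul_eq_mul, mul_zero, mul_one, Prod.mk_add_mk,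
      Prod.mk.injEq] at hst
    rw [← hst.1, ← hst.2]
    simp [mul_comm]
  · intro h
    obtain ⟨H, hH⟩ : X ∣ G₁ - C a * G₂ := X_dvd_iff.mpr (by simp [h])
    refine ⟨H, G₂, ?_⟩
    simp only [Prod.smul_mk, smul_eq_mul, mul_zero, mul_one, Prod.mk_add_mk]
    rw [mul_comm H, ← hH]
    ring_nf

noncomputable def colImageBasis {c₁ c₂ a : R} (hc₁ : IsUnit c₁) (ha : c₁ * a = c₂) :
    Module.Basis (Fin 2) R⟦X⟧ (colImage R c₁ c₂) :=
  (Module.Basis.span (linearIndependent_X_zero_C_one a)).map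
    (LinearEquiv.ofEq _ _ (span_X_zero_C_one_eq_colImage hc₁ ha))

theorem coe_colImageBasis {c₁ c₂ a : R} (hc₁ : IsUnit c₁) (ha : c₁ * a = c₂) (i : Fin 2) :
    (colImageBasis hc₁ ha i : R⟦X⟧ × R⟦X⟧) = ![((X : R⟦X⟧), (0 : R⟦X⟧)), (C a, 1)] i := by
  simp [colImageBasis]

end

theorem colImage_basis_general
    (O : Type*) [CommRing O]
    (c₁ c₂ a' : O) (hc₁ : IsUnit c₁) (ha' : c₁ * a' = c₂)
    (M : Type*) [AddCommGroup M] [Module (PowerSeries O) M]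
    (Col : M →ₗ[PowerSeries O] (PowerSeries O × PowerSeries O))
    (hinj : Function.Injective Col)
    (hrange : LinearMap.range Col = colImage O c₁ c₂) :
    (∃ bI : Module.Basis (Fin 2) (PowerSeries O) (colImage O c₁ c₂),
      (bI 0 : PowerSeries O × PowerSeries O) = (PowerSeries.X, 0) ∧
      (bI 1 : PowerSeries O × PowerSeries O) = (PowerSeries.C a', 1)) ∧
    ∃ z₁ z₂ : M, Col z₁ = (PowerSeries.X, 0) ∧ Col z₂ = (PowerSeries.C a', 1) ∧
      ∃ b : Module.Basis (Fin 2) (PowerSeries O) M, b 0 = z₁ ∧ b 1 = z₂ := by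
  set bI := colImageBasis hc₁ ha'
  have hb0 := coe_colImageBasis hc₁ ha' 0
  have hb1 := coe_colImageBasis hc₁ ha' 1
  let e := (LinearEquiv.ofInjective Col hinj).trans (LinearEquiv.ofEq _ _ hrange)
  have hCol (y : colImage O c₁ c₂) : Col (e.symm y) = y := by
    simp [e]
  exact ⟨⟨bI, hb0, hb1⟩, e.symm (bI 0), e.symm (bI 1), by rw [hCol, hb0]; rfl,
    by rw [hCol, hb1]; rfl, bI.map e.symm, rfl, rfl⟩

/-- Let `O` be a complete DVR, `Λ = O[[X]]`, and `c₁, c₂ ∈ O` with `c₁` a unit, and let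
`a' = c₂/c₁`.  Then `(X, 0)` and `(a', 1)` form a `Λ`-basis of
`I = {(G₁,G₂) : c₁·G₁(0) = c₂·G₂(0)}`; hence if `Col : M → Λ ⊕ Λ` is an injective `Λ`-linear
map with image `I`, these elements pull back to a `Λ`-basis `(z₁, z₂)` of `M`. -/
theorem colImage_basis
    (O : Type*) [CommRing O] [IsDomain O] [IsDiscreteValuationRing O]
    [IsAdicComplete (IsLocalRing.maximalIdeal O) O]
    (c₁ c₂ a' : O) (hc₁ : IsUnit c₁) (ha' : c₁ * a' = c₂)
    (M : Type*) [AddCommGroup M] [Module (PowerSeries O) M]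
    (Col : M →ₗ[PowerSeries O] (PowerSeries O × PowerSeries O))
    (hinj : Function.Injective Col)
    (hrange : LinearMap.range Col = colImage O c₁ c₂) :
    (∃ bI : Module.Basis (Fin 2) (PowerSeries O) (colImage O c₁ c₂),
      (bI 0 : PowerSeries O × PowerSeries O) = (PowerSeries.X, 0) ∧
      (bI 1 : PowerSeries O × PowerSeries O) = (PowerSeries.C a', 1)) ∧
    ∃ z₁ z₂ : M, Col z₁ = (PowerSeries.X, 0) ∧ Col z₂ = (PowerSeries.C a', 1) ∧
      ∃ b : Module.Basis (Fin 2) (PowerSeries O) M, b 0 = z₁ ∧ b 1 = z₂ :=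
  colImage_basis_general O c₁ c₂ a' hc₁ ha' M Col hinj hrange
end

section
/- Let K be a field, α ≠ β ∈ K nonzero with αβ = p ∈ K nonzero, and let S be the matrix with rows (1,1), (-α,-β), and A = p^{-1}·S·diag(α,β)·S^{-1}. Let s₁, s₂ ∈ K and Q the matrix with rows (s₁, s₂), (0, 0). Then S^{-1}·A^{n+1}·Q = (α-β)^{-1} · [rows (-s₁/β^n, -s₂/β^n), (s₁/α^n, s₂/α^n)]. -/
/-!
Conjugation by `S` diagonalizes `A`: `A = S (p⁻¹ D) S⁻¹` with `D = diag(α, β)`, so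
`S⁻¹ A^{n+1} Q = (p⁻¹ D)^{n+1} S⁻¹ Q`. Since `p = αβ`, `p⁻¹ D = diag(β⁻¹, α⁻¹)`, and the product
is read off from the adjugate formula `S⁻¹ = (α - β)⁻¹ [[-β, -1], [α, 1]]`.
-/

namespace Matrix

theorem nonsing_inv_mul_conj_pow_mul {ι R : Type*} [Fintype ι] [DecidableEq ι] [CommRing R]
    {S : Matrix ι ι R} (hS : IsUnit S.det) (B Q : Matrix ι ι R) (k : ℕ) :
    S⁻¹ * (S * B * S⁻¹) ^ k * Q = B ^ k * (S⁻¹ * Q) := by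
  rw [show (S * B * S⁻¹) ^ k = S * B ^ k * S⁻¹ from (nonsingInvUnit S hS).conj_pow B k,
    Matrix.mul_assoc S, nonsing_inv_mul_cancel_left _ _ hS, Matrix.mul_assoc]

variable {K : Type*} [Field K]

theorem inv_fin_two_of (a b c d : K) :
    (!![a, b; c, d])⁻¹ = (a * d - b * c)⁻¹ • !![d, -b; -c, a] := by
  rw [inv_def, det_fin_two_of, adjugate_fin_two_of, Ring.inverse_eq_inv]

theorem inv_mul_smul_diagonal_vec2 {α β : K} (hα : α ≠ 0) (hβ : β ≠ 0) :
    (α * β)⁻¹ • diagonal ![α, β] = diagonal ![β⁻¹, α⁻¹] := by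
  rw [← diagonal_smul]
  congr 1
  ext i
  fin_cases i <;> simp [hα, hβ, mul_comm]

end Matrix

open Matrix

theorem log_matrix_computation_general
    (K : Type*) [Field K] (α β p s₁ s₂ : K) (n : ℕ)
    (hne : α ≠ β) (hα : α ≠ 0) (hβ : β ≠ 0) (hprod : α * β = p)
    (S A Q : Matrix (Fin 2) (Fin 2) K)
    (hS : S = !![1, 1; -α, -β])
    (hA : A = p⁻¹ • (S * !![α, 0; 0, β] * S⁻¹))
    (hQ : Q = !![s₁, s₂; 0, 0]) :
    S⁻¹ * A ^ (n + 1) * Q =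
      (α - β)⁻¹ • !![-s₁ / β ^ n, -s₂ / β ^ n; s₁ / α ^ n, s₂ / α ^ n] := by
  have hsub : α - β ≠ 0 := sub_ne_zero.mpr hne
  have hdet : IsUnit S.det := by
    simpa [hS, det_fin_two_of, neg_add_eq_sub] using hsub
  have hA_conj : A = S * diagonal ![β⁻¹, α⁻¹] * S⁻¹ := by
    rw [hA, ← hprod, ← diagonal_vec2, ← inv_mul_smul_diagonal_vec2 hα hβ, Matrix.mul_smul,
      Matrix.smul_mul]
  rw [hA_conj, nonsing_inv_mul_conj_pow_mul hdet, diagonal_pow, hS, inv_fin_two_of, hQ]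
  ext i j
  fin_cases i <;> fin_cases j <;> simp [pow_succ, neg_add_eq_sub] <;> field_simp

/-- Let `K` be a field, `α ≠ β` nonzero with `αβ = p ≠ 0`, `S = [[1,1],[-α,-β]]` and
`A = p⁻¹·S·diag(α,β)·S⁻¹`.  For `Q = [[s₁,s₂],[0,0]]` we have
`S⁻¹·A^{n+1}·Q = (α-β)⁻¹·[[-s₁/β^n, -s₂/β^n],[s₁/α^n, s₂/α^n]]`. -/
theorem log_matrix_computation
    (K : Type*) [Field K] (α β p s₁ s₂ : K) (n : ℕ)
    (hne : α ≠ β) (hα : α ≠ 0) (hβ : β ≠ 0) (hprod : α * β = p) (hp : p ≠ 0)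
    (S A Q : Matrix (Fin 2) (Fin 2) K)
    (hS : S = !![1, 1; -α, -β])
    (hA : A = p⁻¹ • (S * !![α, 0; 0, β] * S⁻¹))
    (hQ : Q = !![s₁, s₂; 0, 0]) :
    S⁻¹ * A ^ (n + 1) * Q =
      (α - β)⁻¹ • !![-s₁ / β ^ n, -s₂ / β ^ n; s₁ / α ^ n, s₂ / α ^ n] :=
  log_matrix_computation_general K α β p s₁ s₂ n hne hα hβ hprod S A Q hS hA hQ
end
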